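/- In the graph consensus setting with each A_i symmetric positive semidefinite and nonzero, set γ_min = min_i λ_max(A_i)⁻¹ and α_max = max_i α_i, where λ_max(A_i) > 0 is the largest eigenvalue of A_i. Let μ > 0 satisfy Σ_{{i,j}∈E(Γ)} ‖y_i − y_j‖² ≤ μ Σ_{i=1}^n ‖y_i‖² for all (y_1,…,y_n) ∈ (ℝ^d)^n. If 0 < α_max < 2γ_min/μ, then for every k ∈ ℕ, V(x(k+1)) − V(x(k)) ≤ −(γ_min/α_max − μ/2) Σ_{i=1}^n ‖x_i(k+1) − x_i(k)‖² ≤ 0, so V is non-increasing along the iteration. -/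

import Mathlib

open Matrix BigOperators

/-- The Euclidean norm on `Fin d → ℝ`. -/
noncomputable def enorm {d : ℕ} (v : Fin d → ℝ) : ℝ := Real.sqrt (∑ a, v a ^ 2)

/-- The Lyapunov function `V(x) = ½ ∑_{{i,j} ∈ E(Γ)} ‖x_i − x_j‖²` (each undirected
edge counted once, as the pair `i < j`). -/
noncomputable def lyapV {n d : ℕ} (Γ : SimpleGraph (Fin n)) [DecidableRel Γ.Adj]
    (x : Fin n → Fin d → ℝ) : ℝ :=
  (1 / 2) * ∑ i : Fin n, ∑ j ∈ Finset.univ.filter (fun j : Fin n => i < j ∧ Γ.Adj i j),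
    _root_.enorm (x i - x j) ^ 2

lemma enorm_sq {d : ℕ} (v : Fin d → ℝ) : _root_.enorm v ^ 2 = v ⬝ᵥ v := by
  unfold _root_.enorm
  rw [Real.sq_sqrt (by positivity)]
  simp [dotProduct, sq]

lemma dotProduct_self_nonneg' {d : ℕ} (v : Fin d → ℝ) : 0 ≤ v ⬝ᵥ v := by
  rw [← enorm_sq]; positivity

lemma sum_dotProduct' {d : ℕ} {ι : Type*} (s : Finset ι) (f : ι → Fin d → ℝ) (v : Fin d → ℝ) :
    (∑ j ∈ s, f j) ⬝ᵥ v = ∑ j ∈ s, (f j ⬝ᵥ v) := by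
  simp only [dotProduct, Finset.sum_apply, Finset.sum_mul]
  exact Finset.sum_comm

lemma sym_sum {n : ℕ} (Γ : SimpleGraph (Fin n)) [DecidableRel Γ.Adj] (F : Fin n → Fin n → ℝ) :
    ∑ i, ∑ j ∈ Γ.neighborFinset i, F i j
      = ∑ i, ∑ j ∈ Finset.univ.filter (fun j : Fin n => i < j ∧ Γ.Adj i j), (F i j + F j i) := by
  have split : ∀ i : Fin n, ∑ j ∈ Γ.neighborFinset i, F i j
      = (∑ j ∈ Finset.univ.filter (fun j : Fin n => i < j ∧ Γ.Adj i j), F i j)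
        + ∑ j ∈ Finset.univ.filter (fun j : Fin n => j < i ∧ Γ.Adj i j), F i j := by
    intro i
    rw [SimpleGraph.neighborFinset_eq_filter, Finset.sum_filter, Finset.sum_filter,
      Finset.sum_filter, ← Finset.sum_add_distrib]
    refine Finset.sum_congr rfl fun j _ => ?_
    by_cases hadj : Γ.Adj i j
    · have hne : i ≠ j := hadj.ne
      rcases lt_or_gt_of_ne hne with h | h
      · simp [hadj, h, not_lt_of_gt h]
      · simp [hadj, h, not_lt_of_gt h]
    · simp [hadj]
  have swap : ∑ i : Fin n, ∑ j ∈ Finset.univ.filter (fun j : Fin n => j < i ∧ Γ.Adj i j), F i j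
      = ∑ i : Fin n, ∑ j ∈ Finset.univ.filter (fun j : Fin n => i < j ∧ Γ.Adj i j), F j i := by
    rw [Finset.sum_comm' (s' := fun j => Finset.univ.filter (fun i : Fin n => j < i ∧ Γ.Adj i j))
      (t' := Finset.univ)]
    · refine Finset.sum_congr rfl fun j _ => ?_
      refine Finset.sum_congr (Finset.filter_congr fun i _ => ?_) fun i _ => rfl
      rw [Γ.adj_comm]
    · intro i j
      simp [and_comm]
  simp only [split, Finset.sum_add_distrib, swap]

section
variable {d : ℕ} {A : Matrix (Fin d) (Fin d) ℝ}

lemma eig_le (hA : A.PosSemidef) {lam : ℝ}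
    (htop : ∀ (t : ℝ) (v : Fin d → ℝ), v ≠ 0 → A.mulVec v = t • v → t ≤ lam) (k : Fin d) :
    hA.1.eigenvalues k ≤ lam := by
  refine htop _ (hA.1.eigenvectorBasis k) ?_ (hA.1.mulVec_eigenvectorBasis k)
  have h0 := hA.1.eigenvectorBasis.orthonormal.ne_zero k
  intro hc
  apply h0
  ext a
  exact congrFun hc a

lemma diag_real (hA : A.PosSemidef) :
    (diagonal (RCLike.ofReal ∘ hA.1.eigenvalues) : Matrix (Fin d) (Fin d) ℝ)
      = diagonal hA.1.eigenvalues := rfl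

lemma spec_decomp (hA : A.PosSemidef) :
    A = (hA.1.eigenvectorUnitary : Matrix (Fin d) (Fin d) ℝ) * diagonal hA.1.eigenvalues
        * star (hA.1.eigenvectorUnitary : Matrix (Fin d) (Fin d) ℝ) := by
  have := hA.1.spectral_theorem
  rwa [diag_real hA] at this

lemma quad_bound (hA : A.PosSemidef) {lam : ℝ}
    (htop : ∀ (t : ℝ) (v : Fin d → ℝ), v ≠ 0 → A.mulVec v = t • v → t ≤ lam)
    (w : Fin d → ℝ) :
    (A *ᵥ w) ⬝ᵥ (A *ᵥ w) ≤ lam * (w ⬝ᵥ (A *ᵥ w)) := by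
  set U : Matrix (Fin d) (Fin d) ℝ := (hA.1.eigenvectorUnitary : Matrix (Fin d) (Fin d) ℝ) with hU
  set e := hA.1.eigenvalues with he
  have hUU : star U * U = 1 := Unitary.coe_star_mul_self hA.1.eigenvectorUnitary
  have hkey : lam • A - A * A = U * diagonal (fun k => lam * e k - e k * e k) * star U := by
    have hdiag : (diagonal (fun k => lam * e k - e k * e k) : Matrix (Fin d) (Fin d) ℝ)
        = lam • diagonal e - diagonal e * diagonal e := by
      rw [diagonal_mul_diagonal, ← diagonal_smul, ← diagonal_sub]
      rfl
    rw [hdiag]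
    have hspec := spec_decomp hA
    rw [Matrix.mul_sub, Matrix.sub_mul, Matrix.mul_smul, Matrix.smul_mul]
    rw [← hspec]
    congr 1
    calc A * A = (U * diagonal e * star U) * (U * diagonal e * star U) := by rw [← hspec]
      _ = U * diagonal e * (star U * U) * diagonal e * star U := by
          simp only [Matrix.mul_assoc]
      _ = U * (diagonal e * diagonal e) * star U := by
          rw [hUU]
          simp only [Matrix.mul_assoc, Matrix.mul_one]
  have hB : (lam • A - A * A).PosSemidef := by
    rw [hkey]
    refine (Matrix.posSemidef_diagonal_iff.mpr fun k => ?_).mul_mul_conjTranspose_same U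
    have h1 : 0 ≤ e k := hA.eigenvalues_nonneg k
    have h2 : e k ≤ lam := eig_le hA htop k
    nlinarith
  have h0 := hB.dotProduct_mulVec_nonneg w
  simp only [RCLike.re_to_real, star_trivial] at h0
  have hexp : w ⬝ᵥ ((lam • A - A * A) *ᵥ w)
      = lam * (w ⬝ᵥ (A *ᵥ w)) - (A *ᵥ w) ⬝ᵥ (A *ᵥ w) := by
    rw [Matrix.sub_mulVec, dotProduct_sub, Matrix.smul_mulVec, dotProduct_smul]
    have : w ⬝ᵥ ((A * A) *ᵥ w) = (A *ᵥ w) ⬝ᵥ (A *ᵥ w) := by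
      rw [← Matrix.mulVec_mulVec, Matrix.dotProduct_mulVec w A,
        ← Matrix.mulVec_transpose]
      congr 1
      exact congrArg (· *ᵥ w) hA.1.eq.symm ▸ rfl
    rw [this]
    simp
  rw [hexp] at h0
  linarith

lemma lam_pos (hA : A.PosSemidef) (hA0 : A ≠ 0) {lam : ℝ}
    (htop : ∀ (t : ℝ) (v : Fin d → ℝ), v ≠ 0 → A.mulVec v = t • v → t ≤ lam) :
    0 < lam := by
  by_contra hc
  push_neg at hc
  apply hA0
  have hz : hA.1.eigenvalues = 0 := by
    funext k
    have h1 : 0 ≤ hA.1.eigenvalues k := hA.eigenvalues_nonneg k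
    have h2 : hA.1.eigenvalues k ≤ lam := eig_le hA htop k
    exact le_antisymm (h2.trans hc) h1
  have := spec_decomp hA
  rw [hz] at this
  rw [this]
  ext a b
  simp [Matrix.mul_apply, Matrix.diagonal]

end

/-- In the graph consensus setting with nonzero symmetric PSD weights
`A_i`, with `γ_min = min_i λ_max(A_i)⁻¹` and `α_max = max_i α_i`, if the largest
Laplacian eigenvalue of `Γ` is at most `μ` and `0 < α_max < 2 γ_min / μ`, then
`V(x(k+1)) − V(x(k)) ≤ −(γ_min/α_max − μ/2) ∑_i ‖x_i(k+1) − x_i(k)‖² ≤ 0`. -/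
theorem lyapunov_nonincreasing_psd_weights
    (n d : ℕ) (hn : 0 < n) (hd : 0 < d)
    (Γ : SimpleGraph (Fin n)) [DecidableRel Γ.Adj]
    (A : Fin n → Matrix (Fin d) (Fin d) ℝ)
    (hpsd : ∀ i, (A i).PosSemidef) (hA0 : ∀ i, A i ≠ 0)
    (α : Fin n → ℝ) (hα : ∀ i, 0 < α i)
    (lmax : Fin n → ℝ)
    (hlmax_eig : ∀ i, ∃ v : Fin d → ℝ, v ≠ 0 ∧ (A i).mulVec v = lmax i • v)
    (hlmax_top : ∀ (i : Fin n) (t : ℝ) (v : Fin d → ℝ),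
      v ≠ 0 → (A i).mulVec v = t • v → t ≤ lmax i)
    (γmin αmax : ℝ)
    (hγmin : γmin = Finset.univ.inf' (Finset.univ_nonempty_iff.mpr ⟨⟨0, hn⟩⟩)
      (fun i : Fin n => (lmax i)⁻¹))
    (hαmax : αmax = Finset.univ.sup' (Finset.univ_nonempty_iff.mpr ⟨⟨0, hn⟩⟩) α)
    (μ : ℝ) (hμ : 0 < μ)
    (hμbound : ∀ y : Fin n → Fin d → ℝ,
      ∑ i : Fin n, ∑ j ∈ Finset.univ.filter (fun j : Fin n => i < j ∧ Γ.Adj i j),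
          _root_.enorm (y i - y j) ^ 2 ≤ μ * ∑ i : Fin n, _root_.enorm (y i) ^ 2)
    (hstep : αmax < 2 * γmin / μ)
    (x : ℕ → Fin n → Fin d → ℝ)
    (hupd : ∀ k i, x (k + 1) i =
      x k i - α i • (A i).mulVec (∑ j ∈ Γ.neighborFinset i, (x k i - x k j))) :
    ∀ k : ℕ,
      lyapV Γ (x (k + 1)) - lyapV Γ (x k) ≤
          -(γmin / αmax - μ / 2) * ∑ i : Fin n, _root_.enorm (x (k + 1) i - x k i) ^ 2 ∧
      -(γmin / αmax - μ / 2) * ∑ i : Fin n, _root_.enorm (x (k + 1) i - x k i) ^ 2 ≤ 0 := by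
  intro k
  -- positivity facts
  have hlampos : ∀ i, 0 < lmax i := fun i => lam_pos (hpsd i) (hA0 i) (hlmax_top i)
  have hγpos : 0 < γmin := by
    rw [hγmin, Finset.lt_inf'_iff]
    exact fun i _ => inv_pos.mpr (hlampos i)
  have hαmax_pos : 0 < αmax := by
    rw [hαmax]
    exact lt_of_lt_of_le (hα ⟨0, hn⟩) (Finset.le_sup' α (Finset.mem_univ _))
  have hcpos : 0 < γmin / αmax - μ / 2 := by
    have h1 : αmax * μ < 2 * γmin := (lt_div_iff₀ hμ).mp hstep
    have h2 : μ / 2 < γmin / αmax := by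
      rw [div_lt_div_iff₀ (by norm_num) hαmax_pos]
      linarith
    linarith
  -- setup
  set δ : Fin n → Fin d → ℝ := fun i => x (k + 1) i - x k i with hδdef
  set g : Fin n → Fin d → ℝ := fun i => ∑ j ∈ Γ.neighborFinset i, (x k i - x k j) with hgdef
  have hδeq : ∀ i, δ i = -(α i • (A i).mulVec (g i)) := by
    intro i
    show x (k + 1) i - x k i = _
    rw [hupd k i]
    abel
  -- norms as dot products
  have hSeq : ∑ i : Fin n, _root_.enorm (x (k + 1) i - x k i) ^ 2 = ∑ i, δ i ⬝ᵥ δ i :=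
    Finset.sum_congr rfl fun i _ => enorm_sq _
  have hSdnn : 0 ≤ ∑ i, δ i ⬝ᵥ δ i :=
    Finset.sum_nonneg fun i _ => dotProduct_self_nonneg' _
  -- expansion of the Lyapunov difference
  have hsplit : ∀ i j : Fin n, _root_.enorm (x (k + 1) i - x (k + 1) j) ^ 2
      = _root_.enorm (x k i - x k j) ^ 2 + 2 * ((x k i - x k j) ⬝ᵥ (δ i - δ j))
        + _root_.enorm (δ i - δ j) ^ 2 := by
    intro i j
    have hx : x (k + 1) i - x (k + 1) j = (x k i - x k j) + (δ i - δ j) := by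
      show _ = _ + ((x (k + 1) i - x k i) - (x (k + 1) j - x k j))
      abel
    rw [hx, enorm_sq, enorm_sq, enorm_sq, dotProduct_add, add_dotProduct, add_dotProduct,
      dotProduct_comm (δ i - δ j) (x k i - x k j)]
    ring
  have hT : (∑ i : Fin n, ∑ j ∈ Finset.univ.filter (fun j : Fin n => i < j ∧ Γ.Adj i j),
        (x k i - x k j) ⬝ᵥ (δ i - δ j)) = ∑ i, g i ⬝ᵥ δ i := by
    have hs := sym_sum Γ (fun i j => (x k i - x k j) ⬝ᵥ δ i)
    have h1 : (∑ i : Fin n, ∑ j ∈ Finset.univ.filter (fun j : Fin n => i < j ∧ Γ.Adj i j),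
          (x k i - x k j) ⬝ᵥ (δ i - δ j))
        = ∑ i : Fin n, ∑ j ∈ Finset.univ.filter (fun j : Fin n => i < j ∧ Γ.Adj i j),
          ((x k i - x k j) ⬝ᵥ δ i + (x k j - x k i) ⬝ᵥ δ j) := by
      refine Finset.sum_congr rfl fun i _ => Finset.sum_congr rfl fun j _ => ?_
      rw [dotProduct_sub]
      have : (x k j - x k i) ⬝ᵥ δ j = -((x k i - x k j) ⬝ᵥ δ j) := by
        rw [show x k j - x k i = -(x k i - x k j) by abel, neg_dotProduct]
      rw [this]
      ring
    rw [h1, ← hs]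
    refine Finset.sum_congr rfl fun i _ => ?_
    rw [hgdef]
    exact (sum_dotProduct' _ _ _).symm
  have key : lyapV Γ (x (k + 1)) - lyapV Γ (x k)
      = (∑ i, g i ⬝ᵥ δ i)
        + (1 / 2) * ∑ i : Fin n, ∑ j ∈ Finset.univ.filter (fun j : Fin n => i < j ∧ Γ.Adj i j),
            _root_.enorm (δ i - δ j) ^ 2 := by
    unfold lyapV
    rw [show (∑ i : Fin n, ∑ j ∈ Finset.univ.filter (fun j : Fin n => i < j ∧ Γ.Adj i j),
        _root_.enorm (x (k + 1) i - x (k + 1) j) ^ 2)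
        = (∑ i : Fin n, ∑ j ∈ Finset.univ.filter (fun j : Fin n => i < j ∧ Γ.Adj i j),
            _root_.enorm (x k i - x k j) ^ 2)
          + 2 * (∑ i : Fin n, ∑ j ∈ Finset.univ.filter (fun j : Fin n => i < j ∧ Γ.Adj i j),
            (x k i - x k j) ⬝ᵥ (δ i - δ j))
          + ∑ i : Fin n, ∑ j ∈ Finset.univ.filter (fun j : Fin n => i < j ∧ Γ.Adj i j),
            _root_.enorm (δ i - δ j) ^ 2 by
      simp only [hsplit, Finset.sum_add_distrib, Finset.mul_sum]]
    rw [hT]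
    ring
  -- per-node bound
  have hnode : ∀ i, g i ⬝ᵥ δ i ≤ -(γmin / αmax) * (δ i ⬝ᵥ δ i) := by
    intro i
    have hq : 0 ≤ g i ⬝ᵥ ((A i) *ᵥ g i) := by
      have := (hpsd i).dotProduct_mulVec_nonneg (g i)
      simpa using this
    have hr := quad_bound (hpsd i) (hlmax_top i) (g i)
    have hrnn : 0 ≤ ((A i) *ᵥ g i) ⬝ᵥ ((A i) *ᵥ g i) := dotProduct_self_nonneg' _
    have h1 : g i ⬝ᵥ δ i = -(α i * (g i ⬝ᵥ ((A i) *ᵥ g i))) := by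
      rw [hδeq i, dotProduct_neg, dotProduct_smul]
      simp
    have h2 : δ i ⬝ᵥ δ i = α i ^ 2 * (((A i) *ᵥ g i) ⬝ᵥ ((A i) *ᵥ g i)) := by
      rw [hδeq i, neg_dotProduct, dotProduct_neg, neg_neg, smul_dotProduct, dotProduct_smul]
      simp [smul_eq_mul]
      ring
    rw [h1, h2]
    have hαi : α i ≤ αmax := by
      rw [hαmax]; exact Finset.le_sup' α (Finset.mem_univ i)
    have hγl : γmin * lmax i ≤ 1 := by
      have hle : γmin ≤ (lmax i)⁻¹ := by
        rw [hγmin]; exact Finset.inf'_le _ (Finset.mem_univ i)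
      have := mul_le_mul_of_nonneg_right hle (le_of_lt (hlampos i))
      rwa [inv_mul_cancel₀ (ne_of_gt (hlampos i))] at this
    have hgoal : (γmin / αmax) * (α i ^ 2 * (((A i) *ᵥ g i) ⬝ᵥ ((A i) *ᵥ g i)))
        ≤ α i * (g i ⬝ᵥ ((A i) *ᵥ g i)) := by
      rw [div_mul_eq_mul_div, div_le_iff₀ hαmax_pos]
      nlinarith [mul_le_mul_of_nonneg_right hγl (mul_nonneg (sq_nonneg (α i)) hq),
        mul_le_mul_of_nonneg_right hαi (mul_nonneg (hα i).le hq),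
        mul_le_mul_of_nonneg_left hr
          (mul_nonneg (mul_nonneg hγpos.le (sq_nonneg (α i))) (by norm_num : (0:ℝ) ≤ 1))]
    nlinarith [mul_le_mul_of_nonneg_left hr
        (mul_nonneg (div_nonneg hγpos.le hαmax_pos.le) (sq_nonneg (α i)))]
  have hsum1 : (∑ i, g i ⬝ᵥ δ i) ≤ -(γmin / αmax) * ∑ i, δ i ⬝ᵥ δ i := by
    calc (∑ i, g i ⬝ᵥ δ i) ≤ ∑ i, -(γmin / αmax) * (δ i ⬝ᵥ δ i) :=
          Finset.sum_le_sum fun i _ => hnode i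
      _ = -(γmin / αmax) * ∑ i, δ i ⬝ᵥ δ i := by rw [← Finset.mul_sum]
  have hμ2 : (∑ i : Fin n, ∑ j ∈ Finset.univ.filter (fun j : Fin n => i < j ∧ Γ.Adj i j),
        _root_.enorm (δ i - δ j) ^ 2) ≤ μ * ∑ i, δ i ⬝ᵥ δ i := by
    have := hμbound δ
    rwa [show (∑ i : Fin n, _root_.enorm (δ i) ^ 2) = ∑ i, δ i ⬝ᵥ δ i from
      Finset.sum_congr rfl fun i _ => enorm_sq _] at this
  constructor
  · rw [key, hSeq]
    nlinarith [hsum1, hμ2, hSdnn]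
  · rw [hSeq]
    nlinarith [mul_nonneg hcpos.le hSdnn]
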